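/- Let K, D, N be positive integers with 2 ≤ D ≤ K-1, N ≥ 2, and set g = ⌈K/D⌉. If N and K - D(g-1) are coprime, then N^g / gcd(N^g, D·(N^g - 1)/(N-1) + K - D·g) = N^g; that is, the subpacketization lower bound L_* equals the upper bound L^* = N^g. -/
import Mathlib

lemma geom_aux (N : ℕ) (hN : 2 ≤ N) : ∀ g : ℕ,
    (N - 1) * (∑ i ∈ Finset.range g, N ^ i) = N ^ g - 1 := by
  intro g
  induction g with
  | zero => simp
  | succ m ih =>
    rw [Finset.sum_range_succ, Nat.mul_add, ih]
    have h1 : 1 ≤ N ^ m := Nat.one_le_pow _ _ (by omega)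
    have h2 : N ^ (m + 1) = N * N ^ m := by ring
    have h3 : (N - 1) * N ^ m = N * N ^ m - N ^ m := by
      rw [Nat.sub_mul, Nat.one_mul]
    have h4 : N ^ m ≤ N * N ^ m := Nat.le_mul_of_pos_left _ (by omega)
    rw [h2, h3]
    omega

/-- If N and K - D(g-1) are coprime (g = ⌈K/D⌉), then
N^g / gcd(N^g, D(N^g-1)/(N-1) + K - Dg) = N^g. -/
theorem stmt_9 (K D N g : ℕ) (hD : 2 ≤ D) (hDK : D ≤ K - 1) (hN : 2 ≤ N)
    (hg : g = (K + D - 1) / D) (hcop : Nat.Coprime N (K - D * (g - 1))) :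
    N ^ g / Nat.gcd (N ^ g) (D * ((N ^ g - 1) / (N - 1)) + K - D * g) = N ^ g := by
  set S : ℕ := ∑ i ∈ Finset.range g, N ^ i with hS
  have hgeom : (N - 1) * S = N ^ g - 1 := geom_aux N hN g
  have hdiv : (N ^ g - 1) / (N - 1) = S := by
    rw [← hgeom, Nat.mul_div_cancel_left _ (by omega)]
  -- bounds on g
  have hdm := Nat.div_add_mod (K + D - 1) D
  rw [← hg] at hdm
  have hmod : (K + D - 1) % D < D := Nat.mod_lt _ (by omega)
  have hmul : D * (g - 1) = D * g - D := by rw [Nat.mul_sub, Nat.mul_one]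
  have hDgK : K ≤ D * g := by omega
  have hg1 : 1 ≤ g := by
    rcases Nat.eq_zero_or_pos g with h | h
    · subst h; simp at hDgK; omega
    · exact h
  have hDg1 : D * (g - 1) ≤ K - 1 := by omega
  -- S ≥ g
  have hSg : g ≤ S := by
    calc g = ∑ _i ∈ Finset.range g, 1 := by simp
    _ ≤ S := Finset.sum_le_sum fun i _ => Nat.one_le_pow _ _ (by omega)
  have hDSg : D * g ≤ D * S := Nat.mul_le_mul_left D hSg
  -- S ≡ 1 mod N
  obtain ⟨m, rfl⟩ : ∃ m, g = m + 1 := ⟨g - 1, by omega⟩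
  have hSmod : S = N * (∑ i ∈ Finset.range m, N ^ i) + 1 := by
    rw [hS, Finset.sum_range_succ']
    simp [pow_succ, Finset.mul_sum]
    ring_nf
  -- coprimality mod N
  have hcop2 : Nat.Coprime N (D * S + K - D * (m + 1)) := by
    rw [Nat.coprime_comm, ← ZMod.isUnit_iff_coprime] at hcop ⊢
    have heq : ((D * S + K - D * (m + 1) : ℕ) : ZMod N)
        = ((K - D * (m + 1 - 1) : ℕ) : ZMod N) := by
      rw [Nat.cast_sub (by omega : D * (m + 1) ≤ D * S + K),
          Nat.cast_sub (by omega : D * (m + 1 - 1) ≤ K)]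
      push_cast
      rw [hSmod]
      push_cast
      rw [ZMod.natCast_self]
      ring
    rwa [heq]
  have hcop3 : Nat.Coprime (N ^ (m + 1)) (D * S + K - D * (m + 1)) :=
    Nat.Coprime.pow_left _ hcop2
  rw [hdiv, hcop3, Nat.div_one]
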